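/- For every integer K ≥ 5, Φ⁻¹(1 - 1/K) ≥ √(log(K²/(4π log K))). -/

import Mathlib

/-!
Birnbaum's bound on the Mills ratio, `e^{x²/2} ∫ₓ^∞ e^{-u²/2} du ≥ (√(x² + 4) - x) / 2` for
`x ≥ 0`, follows by integrating the derivative of the right-hand side times `e^{-x²/2}`.
For `x² = log (K² / (4π log K))` one has `e^{-x²/2} = √(2π) √(2 log K) / K`, so `Φ(x) ≤ 1 - 1/K`
reduces to `(√(x² + 4) - x) √(2 log K) ≥ 2`, which holds as soon as `x² + 2 ≤ 2 log K`,
i.e. `4π log K ≥ e²`. The bound `K² ≥ 4π log K` for `K ≥ 5` makes `x² ≥ 0`.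
-/

open Real Set

/-- The standard normal cumulative distribution function. -/
noncomputable def Phi (x : ℝ) : ℝ :=
  (Real.sqrt (2 * π))⁻¹ * ∫ u in Set.Iic x, Real.exp (-u ^ 2 / 2)

/-- The inverse of the standard normal cdf. -/
noncomputable def PhiInv : ℝ → ℝ := Function.invFun Phi

open MeasureTheory Filter Topology

lemma integrable_exp_neg_sq_div_two : Integrable fun u : ℝ => exp (-u ^ 2 / 2) := by
  convert integrable_exp_neg_mul_sq (b := 1 / 2) (by norm_num) using 3
  ring

lemma integral_exp_neg_sq_div_two : ∫ u : ℝ, exp (-u ^ 2 / 2) = √(2 * π) := by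
  convert integral_gaussian (1 / 2) using 4
  · ring
  · field_simp

lemma Phi_sub_Phi (x y : ℝ) :
    Phi y - Phi x = (√(2 * π))⁻¹ * ∫ u in x..y, exp (-u ^ 2 / 2) := by
  rw [Phi, Phi, ← mul_sub, intervalIntegral.integral_Iic_sub_Iic
    integrable_exp_neg_sq_div_two.integrableOn integrable_exp_neg_sq_div_two.integrableOn]

lemma hasDerivAt_Phi (x : ℝ) : HasDerivAt Phi ((√(2 * π))⁻¹ * exp (-x ^ 2 / 2)) x := by
  have hprim := ((continuous_exp.comp (by fun_prop : Continuous fun u : ℝ => -u ^ 2 / 2)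
    ).integral_hasStrictDerivAt 0 x).hasDerivAt.const_mul (√(2 * π))⁻¹
  have hPhi : Phi = fun y => Phi 0 + (√(2 * π))⁻¹ * ∫ u in (0 : ℝ)..y, exp (-u ^ 2 / 2) := by
    ext y
    rw [← Phi_sub_Phi]
    ring
  rw [hPhi]
  exact hprim.const_add (Phi 0)

lemma Phi_strictMono : StrictMono Phi :=
  strictMono_of_hasDerivAt_pos hasDerivAt_Phi fun _ => by positivity

lemma Phi_continuous : Continuous Phi :=
  continuous_iff_continuousAt.2 fun x => (hasDerivAt_Phi x).continuousAt

lemma tendsto_Phi_atTop : Tendsto Phi atTop (𝓝 1) := by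
  have h := ((aecover_Iic tendsto_id).integral_tendsto_of_countably_generated
    integrable_exp_neg_sq_div_two).const_mul (√(2 * π))⁻¹
  rwa [integral_exp_neg_sq_div_two, inv_mul_cancel₀ (by positivity)] at h

lemma one_sub_Phi (x : ℝ) :
    1 - Phi x = (√(2 * π))⁻¹ * ∫ u in Ioi x, exp (-u ^ 2 / 2) := by
  have h := integral_add_compl measurableSet_Iic integrable_exp_neg_sq_div_two (s := Iic x)
  rw [compl_Iic, integral_exp_neg_sq_div_two] at h
  rw [Phi, eq_inv_mul_iff_mul_eq₀ (by positivity), mul_sub, mul_inv_cancel_left₀ (by positivity)]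
  linarith

lemma Phi_le_one_sub_of_le_integral_Ioi {x a : ℝ}
    (h : √(2 * π) * a ≤ ∫ u in Ioi x, exp (-u ^ 2 / 2)) : Phi x ≤ 1 - a := by
  have ha : a ≤ (√(2 * π))⁻¹ * ∫ u in Ioi x, exp (-u ^ 2 / 2) :=
    (le_inv_mul_iff₀ (by positivity)).2 h
  linarith [one_sub_Phi x]

lemma le_PhiInv {x y : ℝ} (hx : Phi x ≤ y) (hy : y < 1) : x ≤ PhiInv y := by
  obtain ⟨b, hb⟩ := (tendsto_Phi_atTop.eventually_const_lt hy).exists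
  obtain ⟨c, -, hc⟩ := intermediate_value_Icc (Phi_strictMono.le_iff_le.1 (hx.trans hb.le))
    Phi_continuous.continuousOn ⟨hx, hb.le⟩
  have hinv : Phi (PhiInv y) = y := Function.invFun_eq ⟨c, hc⟩
  exact Phi_strictMono.le_iff_le.1 (by rwa [hinv])

noncomputable def birnbaumBound (x : ℝ) : ℝ := (√(x ^ 2 + 4) - x) / 2 * exp (-x ^ 2 / 2)

lemma hasDerivAt_birnbaumBound (u : ℝ) :
    HasDerivAt birnbaumBound
      (-(exp (-u ^ 2 / 2) * (1 - u / √(u ^ 2 + 4) + u * (√(u ^ 2 + 4) - u)) / 2)) u := by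
  have hr : √(u ^ 2 + 4) ≠ 0 := by positivity
  have hsqrt := ((hasDerivAt_pow 2 u).add_const 4).sqrt (by positivity)
  have h : HasDerivAt birnbaumBound _ u :=
    ((hsqrt.sub (hasDerivAt_id' u)).div_const 2).mul
      (((hasDerivAt_pow 2 u).neg.div_const 2).exp)
  convert h using 1
  simp only [Pi.sub_apply, Pi.neg_apply]
  field_simp
  ring

lemma one_sub_div_sqrt_add_mul_sqrt_sub_mem_Icc {u : ℝ} (hu : 0 ≤ u) :
    1 - u / √(u ^ 2 + 4) + u * (√(u ^ 2 + 4) - u) ∈ Icc 0 2 := by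
  set r := √(u ^ 2 + 4)
  have hr2 : r ^ 2 = u ^ 2 + 4 := sq_sqrt (by positivity)
  have hur : u < r := by nlinarith [sqrt_nonneg (u ^ 2 + 4)]
  have hr : 0 < r := by linarith
  constructor
  · have : u / r < 1 := (div_lt_one hr).2 hur
    nlinarith
  · -- the squares of the two sides differ by exactly `4`
    have hcubic : u ^ 3 + 3 * u ≤ r * (u ^ 2 + 1) := by
      nlinarith [mul_pos hr (show 0 < u ^ 2 + 1 by positivity)]
    have : 2 - (1 - u / r + u * (r - u)) = (r * (u ^ 2 + 1) - (u ^ 3 + 3 * u)) / r := by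
      field_simp
      nlinarith
    linarith [div_nonneg (sub_nonneg.2 hcubic) hr.le]

lemma tendsto_birnbaumBound_atTop : Tendsto birnbaumBound atTop (𝓝 0) := by
  have hexp : Tendsto (fun v : ℝ => exp (-v ^ 2 / 2)) atTop (𝓝 0) := tendsto_exp_atBot.comp
    ((tendsto_neg_atTop_atBot.comp (tendsto_pow_atTop two_ne_zero)).atBot_div_const two_pos)
  refine squeeze_zero_norm' ?_ hexp
  filter_upwards [eventually_ge_atTop 0] with v hv
  have hr2 : √(v ^ 2 + 4) ^ 2 = v ^ 2 + 4 := sq_sqrt (by positivity)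
  have hr : |(√(v ^ 2 + 4) - v) / 2| ≤ 1 := by
    rw [abs_le]; constructor <;> nlinarith [sqrt_nonneg (v ^ 2 + 4)]
  rw [birnbaumBound, norm_mul, norm_of_nonneg (exp_pos _).le, Real.norm_eq_abs]
  exact mul_le_of_le_one_left (exp_pos _).le hr

lemma birnbaumBound_le_integral_Ioi {x : ℝ} (hx : 0 ≤ x) :
    birnbaumBound x ≤ ∫ u in Ioi x, exp (-u ^ 2 / 2) := by
  have hderiv : ∀ u ∈ Ici x, _ := fun u _ => hasDerivAt_birnbaumBound u
  have hnonpos : ∀ u ∈ Ioi x, -(exp (-u ^ 2 / 2) *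
      (1 - u / √(u ^ 2 + 4) + u * (√(u ^ 2 + 4) - u)) / 2) ≤ 0 := fun u hu =>
    neg_nonpos.2 <| div_nonneg (mul_nonneg (exp_pos _).le
      (one_sub_div_sqrt_add_mul_sqrt_sub_mem_Icc (hx.trans hu.le)).1) two_pos.le
  have hint := integral_Ioi_of_hasDerivAt_of_nonpos' hderiv hnonpos tendsto_birnbaumBound_atTop
  calc birnbaumBound x
      = ∫ u in Ioi x, exp (-u ^ 2 / 2) *
          (1 - u / √(u ^ 2 + 4) + u * (√(u ^ 2 + 4) - u)) / 2 := by
        rw [← neg_neg (∫ _ in _, _), ← integral_neg, hint, zero_sub, neg_neg]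
    _ ≤ ∫ u in Ioi x, exp (-u ^ 2 / 2) := by
      refine setIntegral_mono_on (by simpa only [Pi.neg_def, neg_neg] using
          (integrableOn_Ioi_deriv_of_nonpos' hderiv hnonpos tendsto_birnbaumBound_atTop).neg)
        integrable_exp_neg_sq_div_two.integrableOn measurableSet_Ioi fun u hu => ?_
      have := (one_sub_div_sqrt_add_mul_sqrt_sub_mem_Icc (hx.trans hu.le)).2
      nlinarith [exp_pos (-u ^ 2 / 2)]

lemma two_le_sqrt_add_four_sub_mul_sqrt {x t : ℝ} (hx : 0 ≤ x) (hxt : x ^ 2 + 2 ≤ t) :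
    2 ≤ (√(x ^ 2 + 4) - x) * √t := by
  set r := √(x ^ 2 + 4)
  have hr2 : r ^ 2 = x ^ 2 + 4 := sq_sqrt (by positivity)
  have hxr : x ≤ r := by nlinarith [sqrt_nonneg (x ^ 2 + 4)]
  have hsum : r + x ≤ 2 * √t := by
    rw [show 2 * √t = √(2 ^ 2 * t) by rw [sqrt_mul (by norm_num), sqrt_sq two_pos.le]]
    apply le_sqrt_of_sq_le
    nlinarith [sqrt_nonneg (x ^ 2 + 4)]
  nlinarith

lemma log_le_div_exp_one {z : ℝ} (hz : 0 < z) : log z ≤ z / exp 1 := by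
  have := log_le_sub_one_of_pos (div_pos hz (exp_pos 1))
  rw [log_div hz.ne' (exp_pos 1).ne', log_exp] at this
  linarith

lemma four_pi_mul_log_le_sq {z : ℝ} (hz : 5 ≤ z) : 4 * π * log z ≤ z ^ 2 := by
  have he : 4 * π ≤ 5 * exp 1 := by
    nlinarith [pi_lt_d2, exp_one_gt_d9]
  have hlog := log_le_div_exp_one (by linarith : 0 < z)
  rw [le_div_iff₀ (exp_pos 1)] at hlog
  refine le_of_mul_le_mul_right ?_ (exp_pos 1)
  calc 4 * π * log z * exp 1 = 4 * π * (log z * exp 1) := by ring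
    _ ≤ 4 * π * z := by gcongr
    _ ≤ 5 * exp 1 * z := by gcongr
    _ ≤ z ^ 2 * exp 1 := by
      nlinarith [mul_le_mul_of_nonneg_right hz (mul_pos (by linarith : 0 < z) (exp_pos 1)).le]

lemma two_le_log_four_pi_mul_log {z : ℝ} (hz : 3 ≤ z) : 2 ≤ log (4 * π * log z) := by
  have hlog : 1 ≤ log z := by
    rw [le_log_iff_exp_le (by linarith)]
    linarith [exp_one_lt_three]
  rw [le_log_iff_exp_le (by nlinarith [pi_pos]), show (2 : ℝ) = 1 + 1 by norm_num, exp_add]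
  nlinarith [exp_one_lt_three, exp_pos 1, pi_gt_three]

lemma exp_neg_log_sq_div_div_two {a b : ℝ} (ha : 0 < a) (hb : 0 < b) :
    exp (-log (a ^ 2 / b) / 2) = √b / a := by
  rw [← log_inv, exp_half, exp_log (by positivity), inv_div, sqrt_div' _ (sq_nonneg a),
    sqrt_sq ha.le]

theorem phiInv_lower_bound (K : ℕ) (hK : 5 ≤ K) :
    PhiInv (1 - 1 / (K : ℝ)) ≥
      Real.sqrt (Real.log ((K : ℝ) ^ 2 / (4 * π * Real.log K))) := by
  have hK5 : (5 : ℝ) ≤ K := by exact_mod_cast hK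
  have hKpos : (0 : ℝ) < K := by linarith
  have hlogK : 0 < log K := log_pos (by linarith)
  set y := log ((K : ℝ) ^ 2 / (4 * π * log K)) with hy_def
  have hy : 0 ≤ y := log_nonneg <| (one_le_div (by positivity)).2 (four_pi_mul_log_le_sq hK5)
  have hx2 : √y ^ 2 = y := sq_sqrt hy
  have hyt : √y ^ 2 + 2 ≤ 2 * log K := by
    have := two_le_log_four_pi_mul_log (by linarith : (3 : ℝ) ≤ K)
    rw [hx2, hy_def, log_div (by positivity) (by positivity), log_pow]
    push_cast
    linarith
  refine le_PhiInv (Phi_le_one_sub_of_le_integral_Ioi ?_) (by simp [hKpos])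
  calc √(2 * π) * (1 / K)
      ≤ √(2 * π) * (1 / K) * ((√(√y ^ 2 + 4) - √y) * √(2 * log K) / 2) := by
        refine le_mul_of_one_le_right (by positivity) ?_
        linarith [two_le_sqrt_add_four_sub_mul_sqrt (sqrt_nonneg y) hyt]
    _ = birnbaumBound √y := by
        rw [birnbaumBound, hx2, exp_neg_log_sq_div_div_two hKpos (by positivity),
          show 4 * π * log K = (2 * π) * (2 * log K) by ring,
          sqrt_mul (by positivity : (0 : ℝ) ≤ 2 * π) (2 * log K)]
        ring
    _ ≤ ∫ u in Ioi √y, exp (-u ^ 2 / 2) := birnbaumBound_le_integral_Ioi (sqrt_nonneg y)
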